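/- arXiv:2212.01702 — 6 statements merged into one kernel-verified Lean document; each statement's English description precedes it below -/
import Mathlib

section
/- For all d ≥ 1 and m ≥ 0, the number A_{2m}^{(d+1)} of closed walks of length 2m in Z^{d+1} satisfies A_{2m}^{(d+1)} = binomial(2m,m) * sum_{k=0}^{m} binomial(m,k)^2 * A_{2k}^{(d)} / binomial(2k,k). -/
/-- The step of the walk on `ℤ^d` determined by a coordinate and a sign. -/
def stepVec (d : ℕ) (s : Fin d × Bool) : Fin d → ℤ :=
  fun t => if t = s.1 then (if s.2 then 1 else -1) else 0

/-- `closedCount d n` is the number `A_{2n}^{(d)}` of walks of length `2n` on `ℤ^d`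
starting and ending at the origin. -/
noncomputable def closedCount (d n : ℕ) : ℕ :=
  Nat.card {f : Fin (2 * n) → Fin d × Bool // ∑ i, stepVec d (f i) = 0}

/-!
Split the steps of a closed walk in `ℤ^(d+e)` according to whether they move one of the first
`d` or one of the last `e` coordinates: the two subsequences are closed walks in `ℤ^d` and
`ℤ^e`, and any choice of the set of times of the first kind together with two such closed
walks recombines. Hence `A_n^(d+e) = ∑_k C(n,k) A_k^(d) A_(n-k)^(e)`. A closed walk in `ℤ` is
a balanced `±1` sequence, so `A_(2i)^(1) = C(2i,i)` and `A_(2i+1)^(1) = 0`; only even `k = 2j`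
survive, and `C(2m,2j) C(2j,j) C(2(m-j),m-j) = C(2m,m) C(m,j)^2`.
-/

open Finset Function

section ClosedWalks

variable {α β σ M N : Type*} [AddCommMonoid M] [AddCommMonoid N]

noncomputable def closedWalkCount (w : σ → M) (ι : Type*) [Fintype ι] : ℕ :=
  Nat.card {f : ι → σ // ∑ i, w (f i) = 0}

theorem closedWalkCount_congr (w : σ → M) {ι κ : Type*} [Fintype ι] [Fintype κ] (e : ι ≃ κ) :
    closedWalkCount w ι = closedWalkCount w κ :=
  Nat.card_congr <| (e.arrowCongr (.refl σ)).subtypeEquiv fun f => by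
    rw [← e.sum_comp]; simp [Equiv.arrowCongr_apply]

theorem closedWalkCount_eq_fin (w : σ → M) (ι : Type*) [Fintype ι] :
    closedWalkCount w ι = closedWalkCount w (Fin (Fintype.card ι)) :=
  closedWalkCount_congr w (Fintype.equivFin ι)

theorem closedWalkCount_comp_equiv (w : σ → M) (e : α ≃ σ) (ι : Type*) [Fintype ι] :
    closedWalkCount (w ∘ e) ι = closedWalkCount w ι :=
  Nat.card_congr <| ((Equiv.refl ι).arrowCongr e).subtypeEquiv fun f => by simp

theorem closedWalkCount_comp_of_injective (w : σ → M) (φ : M →+ N) (hφ : Injective φ)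
    (ι : Type*) [Fintype ι] :
    closedWalkCount (φ ∘ w) ι = closedWalkCount w ι := by
  simp only [closedWalkCount, comp_apply, ← map_sum, map_eq_zero_iff φ hφ]

def sumStep (u : α → M) (v : β → N) : α ⊕ β → M × N :=
  Sum.elim (fun a => (u a, 0)) (fun b => (0, v b))

variable {ι : Type*} [Fintype ι] [DecidableEq ι]

def arrowSumEquiv (S : Finset ι) :
    {f : ι → α ⊕ β // ∀ i, (f i).isLeft ↔ i ∈ S} ≃ (S → α) × ({i // i ∉ S} → β) where
  toFun f := (fun i => (f.1 i).getLeft ((f.2 i).2 i.2),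
    fun i => (f.1 i).getRight (by simpa using mt (f.2 i).1 i.2))
  invFun p := ⟨fun i => if hi : i ∈ S then .inl (p.1 ⟨i, hi⟩) else .inr (p.2 ⟨i, hi⟩),
    fun i => by by_cases hi : i ∈ S <;> simp [hi]⟩
  left_inv f := by
    ext i : 2
    by_cases hi : i ∈ S <;> simp [hi]
  right_inv p := by
    ext i <;> simp [i.2]

theorem sum_sumStep_arrowSumEquiv_symm (u : α → M) (v : β → N) (S : Finset ι)
    (p : (S → α) × ({i // i ∉ S} → β)) :
    ∑ i, sumStep u v (((arrowSumEquiv S).symm p).1 i) = (∑ i, u (p.1 i), ∑ i, v (p.2 i)) := by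
  have hS (i : S) : sumStep u v (((arrowSumEquiv S).symm p).1 i) = (u (p.1 i), 0) := by
    simp [arrowSumEquiv, sumStep, i.2]
  have hSc (i : {i // i ∉ S}) : sumStep u v (((arrowSumEquiv S).symm p).1 i) = (0, v (p.2 i)) := by
    simp [arrowSumEquiv, sumStep, i.2]
  rw [← Fintype.sum_subtype_add_sum_subtype (· ∈ S)]
  simp only [hS, hSc]
  ext
  · simp only [Prod.fst_add, Prod.fst_sum, sum_const_zero, add_zero]
    -- the two sums use different (but equal) `Fintype ↥S` instances
    convert rfl
  · simp only [Prod.snd_add, Prod.snd_sum, sum_const_zero, zero_add]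

def closedWalkFiberEquiv (u : α → M) (v : β → N) (S : Finset ι) :
    {f : {f : ι → α ⊕ β // ∑ i, sumStep u v (f i) = 0} //
        (univ.filter fun i => (f.1 i).isLeft) = S} ≃
      {g : S → α // ∑ i, u (g i) = 0} × {h : {i // i ∉ S} → β // ∑ i, v (h i) = 0} :=
  let fiber : {f : ι → α ⊕ β // ∑ i, sumStep u v (f i) = 0 ∧
      (univ.filter fun i => (f i).isLeft) = S} ≃
      {f : ι → α ⊕ β // (∀ i, (f i).isLeft ↔ i ∈ S) ∧ ∑ i, sumStep u v (f i) = 0} :=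
    Equiv.subtypeEquivRight fun f => by rw [and_comm, Finset.ext_iff]; simp
  let split : {f : {f : ι → α ⊕ β // ∀ i, (f i).isLeft ↔ i ∈ S} //
      ∑ i, sumStep u v (f.1 i) = 0} ≃
      {p : (S → α) × ({i // i ∉ S} → β) // ∑ i, u (p.1 i) = 0 ∧ ∑ i, v (p.2 i) = 0} :=
    ((arrowSumEquiv S).symm.subtypeEquiv fun p => by
      rw [sum_sumStep_arrowSumEquiv_symm, Prod.mk_eq_zero]).symm
  (Equiv.subtypeSubtypeEquivSubtypeInter _ _).trans <| fiber.trans <|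
    (Equiv.subtypeSubtypeEquivSubtypeInter _ _).symm.trans <|
    split.trans (Equiv.subtypeProdEquivProd (p := fun g : S → α => ∑ i, u (g i) = 0)
      (q := fun h : {i // i ∉ S} → β => ∑ i, v (h i) = 0))

theorem closedWalkCount_sumStep [Finite α] [Finite β] (u : α → M) (v : β → N) :
    closedWalkCount (sumStep u v) ι =
      ∑ S : Finset ι, closedWalkCount u S * closedWalkCount v {i // i ∉ S} := by
  rw [closedWalkCount, ← Nat.card_congr (Equiv.sigmaFiberEquiv
    fun f : {f : ι → α ⊕ β // ∑ i, sumStep u v (f i) = 0} => univ.filter fun i => (f.1 i).isLeft),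
    Nat.card_sigma]
  exact sum_congr rfl fun S _ => (Nat.card_congr (closedWalkFiberEquiv u v S)).trans
    (Nat.card_prod _ _)

theorem closedWalkCount_sumStep_fin [Finite α] [Finite β] (u : α → M) (v : β → N) (n : ℕ) :
    closedWalkCount (sumStep u v) (Fin n) =
      ∑ k ∈ range (n + 1), n.choose k *
        (closedWalkCount u (Fin k) * closedWalkCount v (Fin (n - k))) := by
  have hS (S : Finset (Fin n)) : closedWalkCount u S * closedWalkCount v {i // i ∉ S} =
      closedWalkCount u (Fin #S) * closedWalkCount v (Fin (n - #S)) := by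
    rw [closedWalkCount_eq_fin u, closedWalkCount_eq_fin v, Fintype.card_subtype_compl,
      Fintype.card_coe, Fintype.card_fin]
  rw [closedWalkCount_sumStep, ← powerset_univ]
  simp only [hS]
  rw [sum_powerset_apply_card fun k =>
      closedWalkCount u (Fin k) * closedWalkCount v (Fin (n - k)),
    card_univ, Fintype.card_fin]
  simp only [smul_eq_mul]

end ClosedWalks

theorem closedCount_eq_closedWalkCount (d n : ℕ) :
    closedCount d n = closedWalkCount (stepVec d) (Fin (2 * n)) :=
  rfl

def boolSign (b : Bool) : ℤ := if b then 1 else -1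

theorem sum_boolSign_eq {ι : Type*} [Fintype ι] (g : ι → Bool) :
    ∑ i, boolSign (g i) = 2 * #{i | g i} - Fintype.card ι := by
  rw [← card_univ, ← card_filter_add_card_filter_not (s := univ) (fun i => g i = true)]
  simp only [boolSign, sum_ite, sum_const, nsmul_eq_mul]
  push_cast
  ring

def boolFunEquivFinset (ι : Type*) [Fintype ι] [DecidableEq ι] : (ι → Bool) ≃ Finset ι where
  toFun g := {i | g i}
  invFun T i := decide (i ∈ T)
  left_inv g := by ext i; simp
  right_inv T := by ext i; simp

theorem closedWalkCount_boolSign (ι : Type*) [Fintype ι] [DecidableEq ι] :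
    closedWalkCount boolSign ι = Fintype.card {T : Finset ι // 2 * #T = Fintype.card ι} := by
  rw [closedWalkCount, Nat.card_eq_fintype_card]
  refine Fintype.card_congr ((boolFunEquivFinset ι).subtypeEquiv fun g => ?_)
  rw [sum_boolSign_eq, sub_eq_zero]
  simp [boolFunEquivFinset]
  norm_cast

theorem closedWalkCount_boolSign_fin_two_mul (j : ℕ) :
    closedWalkCount boolSign (Fin (2 * j)) = (2 * j).choose j := by
  rw [closedWalkCount_boolSign, Fintype.card_fin]
  conv_rhs => rw [← Fintype.card_fin (2 * j), ← Fintype.card_finset_len]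
  exact Fintype.card_congr (Equiv.subtypeEquivRight fun T => by omega)

theorem closedWalkCount_boolSign_fin_of_odd {n : ℕ} (hn : Odd n) :
    closedWalkCount boolSign (Fin n) = 0 := by
  rw [closedWalkCount_boolSign, Fintype.card_eq_zero_iff, Fintype.card_fin]
  exact ⟨fun T => by obtain ⟨k, rfl⟩ := hn; omega⟩

def splitCoords (d e : ℕ) : (Fin (d + e) → ℤ) →+ (Fin d → ℤ) × (Fin e → ℤ) where
  toFun x := (fun i => x (Fin.castAdd e i), fun j => x (Fin.natAdd d j))
  map_zero' := rfl
  map_add' _ _ := rfl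

theorem splitCoords_injective (d e : ℕ) : Injective (splitCoords d e) := by
  refine (injective_iff_map_eq_zero _).2 fun x hx => funext fun i => ?_
  simp only [splitCoords, AddMonoidHom.coe_mk, ZeroHom.coe_mk, Prod.mk_eq_zero, funext_iff] at hx
  exact Fin.addCases hx.1 hx.2 i

def finAddStepEquiv (d e : ℕ) : (Fin d × Bool) ⊕ (Fin e × Bool) ≃ Fin (d + e) × Bool :=
  (Equiv.sumProdDistrib _ _ _).symm.trans (finSumFinEquiv.prodCongr (.refl Bool))

theorem splitCoords_stepVec (d e : ℕ) (x : (Fin d × Bool) ⊕ (Fin e × Bool)) :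
    splitCoords d e (stepVec (d + e) (finAddStepEquiv d e x)) =
      sumStep (stepVec d) (stepVec e) x := by
  rcases x with ⟨t, b⟩ | ⟨t, b⟩ <;>
  ext i <;> simp [splitCoords, finAddStepEquiv, sumStep, stepVec, Fin.ext_iff] <;> omega

theorem Nat.choose_two_mul_mul_centralBinom_mul_centralBinom {j m : ℕ} (h : j ≤ m) :
    (2 * m).choose (2 * j) * centralBinom j * centralBinom (m - j) =
      centralBinom m * m.choose j ^ 2 := by
  obtain ⟨b, rfl⟩ := Nat.exists_eq_add_of_le h
  rw [Nat.add_sub_cancel_left]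
  simp only [centralBinom_eq_two_mul_choose]
  qify
  rw [Nat.cast_choose ℚ (by omega : 2 * j ≤ 2 * (j + b)), Nat.cast_choose ℚ (by omega : j ≤ 2 * j),
    Nat.cast_choose ℚ (by omega : b ≤ 2 * b), Nat.cast_choose ℚ (by omega : j + b ≤ 2 * (j + b)),
    Nat.cast_choose ℚ (by omega : j ≤ j + b)]
  rw [show 2 * (j + b) - 2 * j = 2 * b by omega, show 2 * j - j = j by omega,
    show 2 * b - b = b by omega, show 2 * (j + b) - (j + b) = j + b by omega,
    Nat.add_sub_cancel_left]
  field_simp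

theorem sum_range_two_mul_add_one_of_odd {M : Type*} [AddCommMonoid M] (f : ℕ → M)
    (hf : ∀ k, Odd k → f k = 0) (m : ℕ) :
    ∑ k ∈ range (2 * m + 1), f k = ∑ j ∈ range (m + 1), f (2 * j) := by
  induction m with
  | zero => simp
  | succ m ih =>
    rw [show 2 * (m + 1) + 1 = 2 * m + 1 + 1 + 1 by ring, sum_range_succ, sum_range_succ, ih,
      hf _ (odd_two_mul_add_one m), add_zero, sum_range_succ (n := m + 1)]
    rfl

theorem closedWalkCount_stepVec_add (d e n : ℕ) :
    closedWalkCount (stepVec (d + e)) (Fin n) =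
      ∑ k ∈ range (n + 1), n.choose k *
        (closedWalkCount (stepVec d) (Fin k) * closedWalkCount (stepVec e) (Fin (n - k))) := by
  have hsplit : (splitCoords d e ∘ stepVec (d + e)) ∘ finAddStepEquiv d e =
      sumStep (stepVec d) (stepVec e) := funext (splitCoords_stepVec d e)
  rw [← closedWalkCount_comp_of_injective _ _ (splitCoords_injective d e),
    ← closedWalkCount_comp_equiv _ (finAddStepEquiv d e), hsplit, closedWalkCount_sumStep_fin]

theorem closedWalkCount_stepVec_one (ι : Type*) [Fintype ι] :
    closedWalkCount (stepVec 1) ι = closedWalkCount boolSign ι := by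
  have hinj : Injective (Pi.evalAddMonoidHom (fun _ : Fin 1 => ℤ) 0) :=
    fun x y h => funext fun i => by rwa [Subsingleton.elim i 0]
  have hcomp : (Pi.evalAddMonoidHom (fun _ : Fin 1 => ℤ) 0 ∘ stepVec 1) =
      boolSign ∘ Equiv.uniqueProd Bool (Fin 1) := by
    funext s; simp [stepVec, boolSign, Subsingleton.elim 0 s.1]
  rw [← closedWalkCount_comp_of_injective _ _ hinj, hcomp, closedWalkCount_comp_equiv]

theorem closedCount_succ_eq_sum (d m : ℕ) :
    closedCount (d + 1) m =
      ∑ j ∈ range (m + 1),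
        (2 * m).choose (2 * j) * (closedCount d j * Nat.centralBinom (m - j)) := by
  have hodd (k : ℕ) (hk : Odd k) :
      (2 * m).choose k * (closedWalkCount (stepVec d) (Fin k) *
        closedWalkCount (stepVec 1) (Fin (2 * m - k))) = 0 := by
    by_cases hkm : k ≤ 2 * m
    · rw [closedWalkCount_stepVec_one,
        closedWalkCount_boolSign_fin_of_odd (Nat.Even.sub_odd hkm (even_two_mul m) hk),
        mul_zero, mul_zero]
    · rw [Nat.choose_eq_zero_of_lt (by omega), zero_mul]
  rw [closedCount_eq_closedWalkCount, closedWalkCount_stepVec_add,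
    sum_range_two_mul_add_one_of_odd _ hodd]
  refine sum_congr rfl fun j _ => ?_
  rw [← Nat.mul_sub, closedWalkCount_stepVec_one, closedWalkCount_boolSign_fin_two_mul,
    ← Nat.centralBinom_eq_two_mul_choose, closedCount_eq_closedWalkCount]

theorem closedCount_succ_general (d m : ℕ) :
    (closedCount (d + 1) m : ℚ) =
      ((2 * m).choose m : ℚ) *
        ∑ k ∈ Finset.range (m + 1),
          (m.choose k : ℚ) ^ 2 * (closedCount d k : ℚ) / ((2 * k).choose k : ℚ) := by
  rw [closedCount_succ_eq_sum, mul_sum]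
  push_cast
  refine sum_congr rfl fun j hj => ?_
  have hcoef : ((2 * m).choose (2 * j) * j.centralBinom * (m - j).centralBinom : ℚ) =
      m.centralBinom * m.choose j ^ 2 := by
    exact_mod_cast Nat.choose_two_mul_mul_centralBinom_mul_centralBinom
      (Nat.lt_succ_iff.1 (mem_range.1 hj))
  have hcb : (j.centralBinom : ℚ) ≠ 0 := by exact_mod_cast j.centralBinom_ne_zero
  rw [← Nat.centralBinom_eq_two_mul_choose, ← Nat.centralBinom_eq_two_mul_choose j]
  field_simp
  linear_combination (closedCount d j : ℚ) * hcoef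

theorem closedCount_succ (d m : ℕ) (hd : 1 ≤ d) :
    (closedCount (d + 1) m : ℚ) =
      ((2 * m).choose m : ℚ) *
        ∑ k ∈ Finset.range (m + 1),
          (m.choose k : ℚ) ^ 2 * (closedCount d k : ℚ) / ((2 * k).choose k : ℚ) :=
  closedCount_succ_general d m
end

section
/- For |w| < 1 and every integer n ≥ 0, sum_{m=0}^{∞} binomial(n+m, m)^2 w^m = (1-w)^{-2n-1} * sum_{k=0}^{n} binomial(n,k)^2 w^k. -/
/-!
Vandermonde's identity applied to one factor of `C(n+m, m)^2`, followed by
`C(n+m, n) C(m, k) = C(n+k, k) C(n+m, n+k)`, writes `C(n+m, m)^2` as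
`∑ₖ C(n, k) C(n+k, k) C(n+m, n+k)`. Each `∑ₘ C(n+m, n+k) wᵐ` is a shifted negative binomial
series with sum `wᵏ / (1-w)^(n+k+1)`, so the series equals
`(1-w)^(-2n-1) ∑ₖ C(n, k) C(n+k, k) wᵏ (1-w)^(n-k)`. The last sum is `∑ₖ C(n, k)^2 wᵏ`: this is
the homogeneous identity `∑ⱼ C(n, j)^2 aʲ (a+b)^(n-j) = ∑ₖ C(n, k) C(n+k, k) aᵏ b^(n-k)` at
`a = w`, `b = 1 - w`, which follows by expanding `(a+b)^(n-j)` and applying Vandermonde once more.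
-/

open Finset

namespace Nat

theorem add_choose_eq_sum_range_choose_mul_choose (m n : ℕ) :
    (m + n).choose n = ∑ i ∈ range (n + 1), m.choose i * n.choose i := by
  rw [add_choose_eq,
    Finset.Nat.sum_antidiagonal_eq_sum_range_succ (fun i j => m.choose i * n.choose j)]
  refine sum_congr rfl fun i hi => ?_
  rw [choose_symm (by simpa [Nat.lt_succ_iff] using hi)]

theorem add_choose_mul_choose (n m k : ℕ) :
    (n + m).choose n * m.choose k = (n + k).choose k * (n + m).choose (n + k) := by
  rcases le_or_gt k m with hkm | hmk
  · rw [choose_symm_add, choose_mul hkm, mul_comm ((n + k).choose k),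
      choose_mul (Nat.le_add_left k n), Nat.add_sub_cancel,
      choose_symm_of_eq_add (by omega : n + m - k = (m - k) + n)]
  · rw [choose_eq_zero_of_lt hmk, choose_eq_zero_of_lt (by omega : n + m < n + k),
      mul_zero, mul_zero]

theorem add_choose_sq_eq_sum (n m : ℕ) :
    (n + m).choose m ^ 2 =
      ∑ k ∈ range (n + 1), n.choose k * (n + k).choose k * (n + m).choose (n + k) := by
  rw [sq, ← choose_symm_add]
  nth_rw 1 [add_comm n m, add_choose_eq_sum_range_choose_mul_choose, sum_mul]
  refine sum_congr rfl fun k _ => ?_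
  rw [mul_comm (m.choose k), mul_assoc, mul_comm (m.choose k), add_choose_mul_choose,
    ← mul_assoc]

theorem sum_range_choose_sq_mul_choose_sub (n k : ℕ) :
    ∑ j ∈ range (k + 1), n.choose j ^ 2 * (n - j).choose (k - j) =
      n.choose k * (n + k).choose k := by
  rw [add_choose_eq_sum_range_choose_mul_choose, mul_sum]
  refine sum_congr rfl fun j hj => ?_
  rw [sq, mul_assoc, ← choose_mul (n := n) (k := k) (by simpa [Nat.lt_succ_iff] using hj)]
  ring

end Nat

theorem sum_range_choose_sq_mul_pow_mul_add_pow {R : Type*} [CommSemiring R] (n : ℕ) (a b : R) :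
    ∑ j ∈ range (n + 1), (n.choose j : R) ^ 2 * a ^ j * (a + b) ^ (n - j) =
      ∑ k ∈ range (n + 1), (n.choose k : R) * (n + k).choose k * a ^ k * b ^ (n - k) := by
  set g : ℕ → ℕ → R := fun j i =>
    ((n.choose j ^ 2 * (n - j).choose i : ℕ) : R) * a ^ (j + i) * b ^ (n - (j + i))
  have expand : ∀ j ∈ range (n + 1),
      (n.choose j : R) ^ 2 * a ^ j * (a + b) ^ (n - j) = ∑ i ∈ range (n + 1 - j), g j i := by
    intro j hj
    rw [add_pow, mul_sum, show n + 1 - j = n - j + 1 by grind]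
    refine sum_congr rfl fun i _ => ?_
    simp only [g, pow_add, Nat.sub_add_eq]
    push_cast
    ring
  have collect : ∀ k ∈ range (n + 1), ∑ j ∈ range (k + 1), g j (k - j) =
      (n.choose k : R) * (n + k).choose k * a ^ k * b ^ (n - k) := by
    intro k _
    have degree : ∀ j ∈ range (k + 1), g j (k - j) =
        ((n.choose j ^ 2 * (n - j).choose (k - j) : ℕ) : R) * a ^ k * b ^ (n - k) := by
      intro j hj
      simp only [g, Nat.add_sub_of_le (by simpa [Nat.lt_succ_iff] using hj)]
    rw [sum_congr rfl degree, ← sum_mul, ← sum_mul, ← Nat.cast_sum,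
      Nat.sum_range_choose_sq_mul_choose_sub]
    push_cast
    rfl
  rw [sum_congr rfl expand, ← sum_range_diag_flip, sum_congr rfl collect]

section NormedField

variable {𝕜 : Type*} [NormedField 𝕜]

theorem hasSum_add_choose_add_mul_geometric (n k : ℕ) {w : 𝕜} (hw : ‖w‖ < 1) :
    HasSum (fun m => ((n + m).choose (n + k) : 𝕜) * w ^ m)
      (w ^ k / (1 - w) ^ (n + k + 1)) := by
  have vanish : ∑ m ∈ range k, ((n + m).choose (n + k) : 𝕜) * w ^ m = 0 :=
    sum_eq_zero fun m hm => by
      rw [Nat.choose_eq_zero_of_lt (by simpa using hm), Nat.cast_zero, zero_mul]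
  have shift (m : ℕ) : ((n + (m + k)).choose (n + k) : 𝕜) * w ^ (m + k) =
      w ^ k * (((m + (n + k)).choose (n + k) : 𝕜) * w ^ m) := by
    rw [show n + (m + k) = m + (n + k) by ring, pow_add]
    ring
  rw [← hasSum_nat_add_iff' k, vanish, sub_zero, ← mul_one_div, funext shift]
  exact (hasSum_choose_mul_geometric_of_norm_lt_one (n + k) hw).mul_left (w ^ k)

theorem hasSum_add_choose_sq_mul_geometric (n : ℕ) {w : 𝕜} (hw : ‖w‖ < 1) :
    HasSum (fun m => ((n + m).choose m : 𝕜) ^ 2 * w ^ m)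
      ((1 - w)⁻¹ ^ (2 * n + 1) * ∑ k ∈ range (n + 1), (n.choose k : 𝕜) ^ 2 * w ^ k) := by
  have hw1 : 1 - w ≠ 0 := sub_ne_zero.2 fun h => by simp [← h] at hw
  have split (m : ℕ) : ((n + m).choose m : 𝕜) ^ 2 * w ^ m = ∑ k ∈ range (n + 1),
      (n.choose k * (n + k).choose k : 𝕜) * ((n + m).choose (n + k) * w ^ m) := by
    rw [← Nat.cast_pow, Nat.add_choose_sq_eq_sum, Nat.cast_sum, sum_mul]
    push_cast
    exact sum_congr rfl fun k _ => by ring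
  have rescale : ∀ k ∈ range (n + 1),
      (n.choose k * (n + k).choose k : 𝕜) * (w ^ k / (1 - w) ^ (n + k + 1)) =
        (1 - w)⁻¹ ^ (2 * n + 1) *
          ((n.choose k : 𝕜) * (n + k).choose k * w ^ k * (1 - w) ^ (n - k)) := by
    intro k hk
    rw [show 2 * n + 1 = (n + k + 1) + (n - k) by grind, inv_pow]
    field_simp
    ring
  have h := hasSum_sum fun k (_ : k ∈ range (n + 1)) =>
    (hasSum_add_choose_add_mul_geometric n k hw).mul_left (n.choose k * (n + k).choose k : 𝕜)
  rw [← funext split, sum_congr rfl rescale, ← mul_sum,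
    ← sum_range_choose_sq_mul_pow_mul_add_pow, add_sub_cancel] at h
  simpa only [one_pow, mul_one] using h

end NormedField

theorem binomial_square_tsum (n : ℕ) (w : ℝ) (hw : |w| < 1) :
    ∑' m : ℕ, ((n + m).choose m : ℝ) ^ 2 * w ^ m =
      (1 - w)⁻¹ ^ (2 * n + 1) *
        ∑ k ∈ Finset.range (n + 1), (n.choose k : ℝ) ^ 2 * w ^ k :=
  (hasSum_add_choose_sq_mul_geometric n (by rwa [Real.norm_eq_abs])).tsum_eq
end

section
/- For |w| < 1 and every integer n ≥ 0, sum_{m=0}^{∞} binomial(n+m, m)^2 w^m = (1-w)^{-n-1} P_n((1+w)/(1-w)), where P_n is the n-th Legendre polynomial. -/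
/-!
Writing `X ^ 2 - 1 = (X - 1) * ((X - 1) + 2)` in Rodrigues' formula gives
`P_n(x) = ∑ₜ C(n,t) C(n+t,t) ((x-1)/2)ᵗ`. At `x = (1+w)/(1-w)` we have `(x-1)/2 = w/(1-w)`, so the
right-hand side is `∑ₜ C(n,t) C(n+t,t) wᵗ/(1-w)^(n+t+1)`. Expanding each `wᵗ/(1-w)^(n+t+1)` as a
negative binomial series, the coefficient of `wᵐ` is
`∑ₜ C(n,t) C(n+t,t) C(n+m,n+t) = C(n+m,n) ∑ₜ C(n,t) C(m,t) = C(n+m,m)²` by Vandermonde.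
-/

open Polynomial

/-- The `n`-th Legendre polynomial over `ℝ`, via Rodrigues' formula. -/
noncomputable def legendre (n : ℕ) : Polynomial ℝ :=
  C ((1 : ℝ) / (2 ^ n * n.factorial)) * (fun q => derivative q)^[n] ((X ^ 2 - 1) ^ n)

open Finset

theorem hasSum_add_choose_add_mul_geometric_of_norm_lt_one {𝕜 : Type*} [NormedDivisionRing 𝕜]
    (k t : ℕ) {r : 𝕜} (hr : ‖r‖ < 1) :
    HasSum (fun m ↦ ((k + m).choose (k + t) : 𝕜) * r ^ m)
      (r ^ t * (1 / (1 - r) ^ (k + t + 1))) := by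
  rw [← hasSum_nat_add_iff' t]
  have hvanish : ∑ i ∈ range t, ((k + i).choose (k + t) : 𝕜) * r ^ i = 0 :=
    sum_eq_zero fun i hi ↦ by
      rw [Nat.choose_eq_zero_of_lt (by simpa using hi), Nat.cast_zero, zero_mul]
  rw [hvanish, sub_zero]
  have hshift : (fun m ↦ ((k + (m + t)).choose (k + t) : 𝕜) * r ^ (m + t)) =
      fun m ↦ r ^ t * (((m + (k + t)).choose (k + t) : 𝕜) * r ^ m) := by
    funext m
    rw [show k + (m + t) = m + (k + t) by ring, ← mul_assoc, ← (Nat.cast_commute _ (r ^ t)).eq,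
      mul_assoc, ← pow_add, add_comm t m]
  rw [hshift]
  exact (hasSum_choose_mul_geometric_of_norm_lt_one (k + t) hr).mul_left (r ^ t)

theorem sum_choose_mul_add_choose_mul_add_choose (n m : ℕ) :
    ∑ t ∈ range (n + 1), n.choose t * (n + t).choose t * (n + m).choose (n + t) =
      (n + m).choose m ^ 2 := by
  have hsplit (t : ℕ) :
      (n + t).choose t * (n + m).choose (n + t) = (n + m).choose n * m.choose t := by
    rw [← Nat.choose_symm_add, mul_comm, Nat.choose_mul (Nat.le_add_right n t),
      Nat.add_sub_cancel_left, Nat.add_sub_cancel_left]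
  have hvandermonde : ∑ t ∈ range (n + 1), n.choose t * m.choose t = (n + m).choose n := by
    rw [add_comm n m, Nat.add_choose_eq, Nat.sum_antidiagonal_eq_sum_range_succ_mk]
    refine sum_congr rfl fun t ht ↦ ?_
    rw [Nat.choose_symm (Nat.lt_succ_iff.mp (mem_range.mp ht)), mul_comm]
  calc ∑ t ∈ range (n + 1), n.choose t * (n + t).choose t * (n + m).choose (n + t)
      = ∑ t ∈ range (n + 1), (n + m).choose n * (n.choose t * m.choose t) :=
        sum_congr rfl fun t _ ↦ by rw [mul_assoc, hsplit, mul_left_comm]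
    _ = (n + m).choose m ^ 2 := by rw [← mul_sum, hvandermonde, Nat.choose_symm_add, sq]

theorem eval_legendre (n : ℕ) (x : ℝ) :
    (legendre n).eval x =
      ∑ j ∈ range (n + 1), (n.choose j * (n + j).choose j : ℝ) * ((x - 1) / 2) ^ j := by
  have hexpand : (X ^ 2 - 1 : ℝ[X]) ^ n =
      ∑ j ∈ range (n + 1), C (n.choose j * 2 ^ (n - j) : ℝ) * (X - C 1) ^ (n + j) := by
    have hfactor : (X ^ 2 - 1 : ℝ[X]) = (X - C 1) * ((X - C 1) + C 2) := by
      simp only [map_one, map_ofNat]; ring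
    rw [hfactor, mul_pow, add_pow, mul_sum]
    refine sum_congr rfl fun j _ ↦ ?_
    simp only [map_mul, map_natCast, map_pow, map_ofNat, pow_add]
    ring
  rw [legendre, hexpand, iterate_derivative_sum, eval_mul, eval_finsetSum, mul_sum]
  refine sum_congr rfl fun j hj ↦ ?_
  have hjn : j ≤ n := Nat.lt_succ_iff.mp (mem_range.mp hj)
  have hdesc : ((n + j).descFactorial n : ℝ) = n.factorial * (n + j).choose j := by
    rw [Nat.descFactorial_eq_factorial_mul_choose, Nat.choose_symm_add]; push_cast; rfl
  have htwo : (2 : ℝ) ^ n = 2 ^ (n - j) * 2 ^ j := by rw [← pow_add, Nat.sub_add_cancel hjn]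
  simp only [iterate_derivative_C_mul, iterate_derivative_X_sub_pow, eval_mul, eval_C, eval_natCast,
    eval_pow, eval_sub, eval_X, nsmul_eq_mul, hdesc, Nat.add_sub_cancel_left]
  rw [htwo, div_pow]
  field_simp

theorem binomial_square_tsum_legendre (n : ℕ) (w : ℝ) (hw : |w| < 1) :
    ∑' m : ℕ, ((n + m).choose m : ℝ) ^ 2 * w ^ m =
      (1 - w)⁻¹ ^ (n + 1) * (legendre n).eval ((1 + w) / (1 - w)) := by
  have hw' : ‖w‖ < 1 := by rwa [Real.norm_eq_abs]
  have hseries := hasSum_sum fun t (_ : t ∈ range (n + 1)) ↦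
    (hasSum_add_choose_add_mul_geometric_of_norm_lt_one n t hw').mul_left
      (n.choose t * (n + t).choose t : ℝ)
  have hcoeff (m : ℕ) : ∑ t ∈ range (n + 1),
      (n.choose t * (n + t).choose t : ℝ) * ((n + m).choose (n + t) * w ^ m) =
        ((n + m).choose m : ℝ) ^ 2 * w ^ m := by
    simp_rw [← mul_assoc, ← sum_mul]
    congr 1
    exact_mod_cast sum_choose_mul_add_choose_mul_add_choose n m
  have hne : 1 - w ≠ 0 := sub_ne_zero.mpr (abs_lt.mp hw).2.ne'
  have hx : ((1 + w) / (1 - w) - 1) / 2 = w / (1 - w) := by field_simp; ring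
  rw [funext hcoeff] at hseries
  rw [hseries.tsum_eq, eval_legendre, hx, mul_sum]
  refine sum_congr rfl fun t _ ↦ ?_
  rw [← one_div, div_pow, div_pow]
  field_simp
  ring
end

section
/- For 0 < a, b positive integers with k ≥ 1 and a, b > 0, the integral bound ∫_b^∞ e^{-sk} s^{a-1} ds ≤ ((b+1)^a (a+1)^{a+1} / min(b,1)) e^{-bk} holds. -/
/-!
For `s > b` and `k ≥ 1` we have `e^{-sk} ≤ e^{-bk} e^{-(s-b)}`, while `s ≤ (b+1)(1+(s-b))` and
`1 + t ≤ (a+1) e^{t/(a+1)}` give `s^a ≤ ((b+1)(a+1))^a e^{a(s-b)/(a+1)}`. Writing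
`s^{a-1} = s^a / s ≤ s^a / b`, the integrand is dominated by
`((b+1)(a+1))^a / b · e^{-bk} · e^{-(s-b)/(a+1)}`, whose integral over `(b, ∞)` is
`((b+1)(a+1))^a (a+1) / b · e^{-bk}`.
-/

open MeasureTheory Real Set

lemma one_add_le_mul_exp_div {c : ℝ} (hc : 1 ≤ c) (t : ℝ) : 1 + t ≤ c * exp (t / c) := by
  have hc0 : 0 < c := by linarith
  calc 1 + t ≤ c * (t / c + 1) := by rw [mul_add, mul_div_cancel₀ t hc0.ne']; linarith
    _ ≤ c * exp (t / c) := by gcongr; exact add_one_le_exp _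

lemma le_mul_mul_exp_div {b s c : ℝ} (hb : 0 ≤ b) (hbs : b ≤ s) (hc : 1 ≤ c) :
    s ≤ (b + 1) * c * exp ((s - b) / c) :=
  calc s ≤ (b + 1) * (1 + (s - b)) := by nlinarith
    _ ≤ (b + 1) * (c * exp ((s - b) / c)) := by gcongr; exact one_add_le_mul_exp_div hc _
    _ = (b + 1) * c * exp ((s - b) / c) := by ring

lemma rpow_sub_one_le_mul_exp {a b s : ℝ} (ha : 0 < a) (hb : 0 < b) (hbs : b ≤ s) :
    s ^ (a - 1) ≤ ((b + 1) * (a + 1)) ^ a / b * exp (a * (s - b) / (a + 1)) := by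
  have hs : 0 < s := hb.trans_le hbs
  have hpow : s ^ a ≤ ((b + 1) * (a + 1)) ^ a * exp (a * (s - b) / (a + 1)) :=
    calc s ^ a ≤ ((b + 1) * (a + 1) * exp ((s - b) / (a + 1))) ^ a := by
          gcongr; exact le_mul_mul_exp_div hb.le hbs (by linarith)
      _ = ((b + 1) * (a + 1)) ^ a * exp (a * (s - b) / (a + 1)) := by
          rw [mul_rpow (by positivity) (exp_pos _).le, ← exp_mul]; ring_nf
  calc s ^ (a - 1) = s ^ a / s := by rw [rpow_sub_one hs.ne']
    _ ≤ s ^ a / b := by gcongr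
    _ ≤ ((b + 1) * (a + 1)) ^ a * exp (a * (s - b) / (a + 1)) / b := by gcongr
    _ = ((b + 1) * (a + 1)) ^ a / b * exp (a * (s - b) / (a + 1)) := by ring

lemma exp_neg_mul_mul_rpow_sub_one_le {a b k s : ℝ} (ha : 0 < a) (hb : 0 < b) (hk : 1 ≤ k)
    (hbs : b ≤ s) :
    exp (-s * k) * s ^ (a - 1) ≤
      ((b + 1) * (a + 1)) ^ a / b * exp (-b * k) * exp (-(s - b) / (a + 1)) := by
  have hexp : exp (-s * k) * exp (a * (s - b) / (a + 1)) ≤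
      exp (-b * k) * exp (-(s - b) / (a + 1)) := by
    have ha1 : a + 1 ≠ 0 := by linarith
    have hsplit : a * (s - b) / (a + 1) = (s - b) - (s - b) / (a + 1) := by field_simp; ring
    rw [← exp_add, ← exp_add, exp_le_exp, hsplit, neg_div]
    nlinarith [mul_nonneg (sub_nonneg.mpr hbs) (sub_nonneg.mpr hk)]
  calc exp (-s * k) * s ^ (a - 1)
      ≤ exp (-s * k) * (((b + 1) * (a + 1)) ^ a / b * exp (a * (s - b) / (a + 1))) := by
        gcongr; exact rpow_sub_one_le_mul_exp ha hb hbs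
    _ = ((b + 1) * (a + 1)) ^ a / b * (exp (-s * k) * exp (a * (s - b) / (a + 1))) := by ring
    _ ≤ ((b + 1) * (a + 1)) ^ a / b * (exp (-b * k) * exp (-(s - b) / (a + 1))) := by
        gcongr
    _ = _ := by ring

lemma exp_neg_sub_div_eq {c : ℝ} (b s : ℝ) :
    exp (-(s - b) / c) = exp (b / c) * exp (-c⁻¹ * s) := by
  rw [← exp_add]; ring_nf

lemma integrableOn_exp_neg_sub_div_Ioi {c : ℝ} (hc : 0 < c) (b : ℝ) :
    IntegrableOn (fun s ↦ exp (-(s - b) / c)) (Ioi b) := by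
  simp_rw [exp_neg_sub_div_eq b]
  exact (integrableOn_exp_mul_Ioi (by simpa using hc) b).const_mul _

lemma integral_exp_neg_sub_div_Ioi {c : ℝ} (hc : 0 < c) (b : ℝ) :
    ∫ s in Ioi b, exp (-(s - b) / c) = c := by
  simp_rw [exp_neg_sub_div_eq b]
  rw [integral_const_mul, integral_exp_mul_Ioi (by simpa using hc), neg_div_neg_eq,
    mul_div_assoc', ← exp_add]
  field_simp
  simp

theorem incompleteGamma_tail_bound (a b k : ℝ) (ha : 0 < a) (hb : 0 < b) (hk : 1 ≤ k) :
    ∫ s in Set.Ioi b, Real.exp (-s * k) * s ^ (a - 1) ≤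
      (b + 1) ^ a * (a + 1) ^ (a + 1) / min b 1 * Real.exp (-b * k) := by
  have ha1 : 0 < a + 1 := by linarith
  set M := ((b + 1) * (a + 1)) ^ a / b * exp (-b * k)
  have hdom : ∀ᵐ s ∂volume.restrict (Ioi b),
      exp (-s * k) * s ^ (a - 1) ≤ M * exp (-(s - b) / (a + 1)) := by
    filter_upwards [ae_restrict_mem measurableSet_Ioi] with s hs
    exact exp_neg_mul_mul_rpow_sub_one_le ha hb hk hs.le
  have hnonneg : ∀ᵐ s ∂volume.restrict (Ioi b), 0 ≤ exp (-s * k) * s ^ (a - 1) := by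
    filter_upwards [ae_restrict_mem measurableSet_Ioi] with s hs
    have : 0 ≤ s := hb.le.trans hs.le
    positivity
  calc ∫ s in Ioi b, exp (-s * k) * s ^ (a - 1)
      ≤ ∫ s in Ioi b, M * exp (-(s - b) / (a + 1)) :=
        integral_mono_of_nonneg hnonneg ((integrableOn_exp_neg_sub_div_Ioi ha1 b).const_mul M) hdom
    _ = M * (a + 1) := by rw [integral_const_mul, integral_exp_neg_sub_div_Ioi ha1]
    _ = (b + 1) ^ a * (a + 1) ^ (a + 1) / b * exp (-b * k) := by
        simp only [M]
        rw [mul_rpow (by linarith) ha1.le, rpow_add ha1, rpow_one]; ring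
    _ ≤ (b + 1) ^ a * (a + 1) ^ (a + 1) / min b 1 * exp (-b * k) := by
        gcongr
        exact min_le_left b 1
end

section
/- If 0 ≤ q ≤ 1/2, d ≥ 2, and n ≥ 1, then (e^{-q} d + 1)^{2n} ≤ (d+1)^{2n} e^{-q n d/(d+1)}. -/
/-!
Since `exp (-q) ≤ 1 - q / 2` for `0 ≤ q ≤ 1`, the base satisfies
`exp (-q) * d + 1 ≤ (d + 1) * (1 - t) ≤ (d + 1) * exp (-t)` with `t = q d / (2 (d + 1))`;
raising this to the power `2 n` gives the bound.
-/

open Real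

lemma Real.exp_neg_le_one_sub_half {x : ℝ} (hx0 : 0 ≤ x) (hx1 : x ≤ 1) :
    exp (-x) ≤ 1 - x / 2 := by
  rw [exp_neg, inv_le_iff_one_le_mul₀' (exp_pos x)]
  calc (1 : ℝ) ≤ (1 + x) * (1 - x / 2) := by nlinarith
    _ ≤ exp x * (1 - x / 2) := by
        gcongr
        · linarith
        · linarith [add_one_le_exp x]

lemma Real.exp_neg_mul_add_one_le {q d : ℝ} (hq0 : 0 ≤ q) (hq1 : q ≤ 1) (hd : 0 ≤ d) :
    exp (-q) * d + 1 ≤ (d + 1) * exp (-(q * d / (2 * (d + 1)))) := by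
  calc exp (-q) * d + 1 ≤ (1 - q / 2) * d + 1 := by
        gcongr; exact exp_neg_le_one_sub_half hq0 hq1
    _ = (d + 1) * (1 - q * d / (2 * (d + 1))) := by field_simp; ring
    _ ≤ (d + 1) * exp (-(q * d / (2 * (d + 1)))) := by
        gcongr; exact one_sub_le_exp_neg _

theorem exp_weighted_bound_general (q : ℝ) (hq0 : 0 ≤ q) (hq : q ≤ 1 / 2) (d n : ℕ) :
    (Real.exp (-q) * d + 1) ^ (2 * n) ≤
      ((d : ℝ) + 1) ^ (2 * n) * Real.exp (-q * n * d / (d + 1)) := by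
  have hbase := exp_neg_mul_add_one_le hq0 (by linarith) (Nat.cast_nonneg' d)
  calc (exp (-q) * d + 1) ^ (2 * n)
      ≤ (((d : ℝ) + 1) * exp (-(q * d / (2 * (d + 1))))) ^ (2 * n) := by gcongr
    _ = ((d : ℝ) + 1) ^ (2 * n) * exp (-q * n * d / (d + 1)) := by
        rw [mul_pow, ← exp_nat_mul]
        congr 2
        field_simp
        push_cast
        ring

theorem exp_weighted_bound (q : ℝ) (hq0 : 0 ≤ q) (hq : q ≤ 1 / 2) (d n : ℕ)
    (hd : 2 ≤ d) (hn : 1 ≤ n) :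
    (Real.exp (-q) * d + 1) ^ (2 * n) ≤
      ((d : ℝ) + 1) ^ (2 * n) * Real.exp (-q * n * d / (d + 1)) :=
  exp_weighted_bound_general q hq0 hq d n
end

section
/- Let G(x) = sum_{n≥0} a_n x^n be a formal power series with integer coefficients, a_0 = 1, satisfying the Lucas property (a_{np+q} ≡ a_n a_q mod p for all large primes p, n ≥ 0, 0 ≤ q ≤ p-1). If G'/G is algebraic over Q(x), then G'/G is a rational function over Q. In particular, for each large prime p, G(x) ≡ G(x)^p · G_p(x) (mod p) where G_p(x) = sum_{n ≤ p-1} a_n x^n, and hence G'/G ≡ G_p'/G_p (mod p). -/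
/-!
Put `A = ∑ aₙ xⁿ ∈ ℤ⟦x⟧` and `F = A'/A`, which lies in `ℤ⟦x⟧` because `a₀ = 1`. Modulo a large
prime `p`, Frobenius turns the Lucas property into `A ≡ A^p · A_p` with `A_p` the truncation of `A`
below degree `p`; as `(A^p)' ≡ 0`, this gives `A_p · F ≡ A_p'`, so `F mod p` is a rational
function `u/v` in lowest terms. An algebraic relation `∑ Sᵢ Fⁱ = 0` with `Sᵢ ∈ ℤ[x]` and
`S₀ ≠ 0 ≠ S_d` reduces mod `p` and, as in the rational root theorem, forces `v ∣ S_d` and `u ∣ S₀`.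
So, uniformly in `p`, the coefficients of `F` satisfy mod `p` a linear recurrence of order
`r = deg S_d` from a fixed index on. The `(r+1) × (r+1)` minors of the corresponding Hankel-type
matrix are then integers divisible by infinitely many primes, hence zero, and the recurrence holds
over `ℚ`: `F` is rational.
-/

open PowerSeries

/-- The formal derivative of a power series over `ℚ`. -/
noncomputable def psDeriv (f : PowerSeries ℚ) : PowerSeries ℚ :=
  PowerSeries.mk fun n => ((n : ℚ) + 1) * PowerSeries.coeff (n + 1) f

open scoped Polynomial

namespace PowerSeries

theorem map_derivative {R S : Type*} [CommRing R] [CommRing S] (φ : R →+* S) (f : R⟦X⟧) :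
    map φ (d⁄dX R f) = d⁄dX S (map φ f) := by
  ext n
  simp [coeff_derivative]

theorem expand_card_zmod (p : ℕ) [Fact p.Prime] (f : (ZMod p)⟦X⟧) :
    expand p (NeZero.ne p) f = f ^ p := by
  rw [← MvPowerSeries.map_frobenius_expand p (NeZero.ne p), ZMod.frobenius_zmod,
    MvPowerSeries.map_id]
  rfl

theorem coeff_expand_mul_of_coeff_eq_zero {R : Type*} [CommRing R] {p : ℕ} (hp : p ≠ 0)
    (φ : R⟦X⟧) {ψ : R⟦X⟧} (hψ : ∀ n, p ≤ n → coeff n ψ = 0) (m : ℕ) :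
    coeff m (expand p hp φ * ψ) = coeff (m / p) φ * coeff (m % p) ψ := by
  rw [coeff_mul, Finset.sum_eq_single_of_mem (p * (m / p), m % p)
    (by simp [Nat.div_add_mod]), coeff_expand_mul]
  rintro ⟨i, j⟩ hij hne
  rw [Finset.HasAntidiagonal.mem_antidiagonal] at hij
  by_cases hpi : p ∣ i
  · obtain ⟨t, rfl⟩ := hpi
    have hj : p ≤ j := by
      by_contra! hj
      apply hne
      have ht : m / p = t := by
        rw [← hij, Nat.mul_add_div (Nat.pos_of_ne_zero hp), Nat.div_eq_of_lt hj, add_zero]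
      have hm : m % p = j := by rw [← hij, Nat.mul_add_mod, Nat.mod_eq_of_lt hj]
      rw [ht, hm]
    rw [hψ j hj, mul_zero]
  · rw [coeff_expand_of_not_dvd p hp φ hpi, zero_mul]

theorem eq_pow_mul_trunc_of_coeff_mul_add {p : ℕ} [Fact p.Prime] {f : (ZMod p)⟦X⟧}
    (hf : ∀ n q, q < p → coeff (n * p + q) f = coeff n f * coeff q f) :
    f = f ^ p * trunc p f := by
  ext m
  have hm := Nat.mod_lt m (NeZero.pos p)
  rw [← expand_card_zmod, coeff_expand_mul_of_coeff_eq_zero _ _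
    (fun n hn => by rw [Polynomial.coeff_coe, coeff_trunc, if_neg (by omega)]),
    Polynomial.coeff_coe, coeff_trunc, if_pos hm, ← hf _ _ hm, Nat.div_add_mod']

theorem mul_derivative_eq_of_eq_pow_mul {R : Type*} [CommRing R] (p : ℕ) [CharP R p]
    {A F P : R⟦X⟧} (hA : IsUnit A) (hAF : A * F = d⁄dX R A) (hAP : A = A ^ p * P) :
    P * F = d⁄dX R P := by
  have hp : (p : R⟦X⟧) = 0 := by rw [← map_natCast C, CharP.cast_eq_zero, map_zero]
  -- `(A ^ p)' = p * A ^ (p - 1) * A'` vanishes in characteristic `p`.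
  have hdA : d⁄dX R A = A ^ p * d⁄dX R P := by
    conv_lhs => rw [hAP]
    simp [hp]
  apply hA.mul_left_cancel
  calc A * (P * F) = P * (A * F) := by ring
    _ = (A ^ p * P) * d⁄dX R P := by rw [hAF, hdA]; ring
    _ = A * d⁄dX R P := by rw [← hAP]

theorem exists_isCoprime_mul_eq {K : Type*} [Field K] {Φ : K⟦X⟧} {C D : K[X]} (hC : C ≠ 0)
    (hCD : (C : K⟦X⟧) * Φ = D) :
    ∃ u v : K[X], IsCoprime v u ∧ v ≠ 0 ∧ (v : K⟦X⟧) * Φ = u := by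
  classical
  set g := gcd D C
  have hg : g ≠ 0 := gcd_ne_zero_of_right hC
  refine ⟨D / g, C / g, (isCoprime_div_gcd_div_gcd hC).symm, right_div_gcd_ne_zero hC, ?_⟩
  apply mul_left_cancel₀ (Polynomial.coe_eq_zero_iff.not.mpr hg)
  rw [← mul_assoc, ← Polynomial.coe_mul, ← Polynomial.coe_mul,
    EuclideanDomain.mul_div_cancel' hg (gcd_dvd_right D C),
    EuclideanDomain.mul_div_cancel' hg (gcd_dvd_left D C), hCD]

theorem sum_mul_pow_mul_pow_eq_zero {R : Type*} [CommRing R] {Φ : R⟦X⟧} {u v : R[X]}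
    (hvu : (v : R⟦X⟧) * Φ = u) {d : ℕ} {T : ℕ → R[X]}
    (hT : ∑ i ∈ Finset.range (d + 1), (T i : R⟦X⟧) * Φ ^ i = 0) :
    ∑ i ∈ Finset.range (d + 1), T i * u ^ i * v ^ (d - i) = 0 := by
  rw [← Polynomial.coe_eq_zero_iff, ← Polynomial.coeToPowerSeries.ringHom_apply, map_sum,
    ← zero_mul ((v : R⟦X⟧) ^ d), ← hT, Finset.sum_mul]
  refine Finset.sum_congr rfl fun i hi => ?_
  have hid : d = i + (d - i) := by have := Finset.mem_range.mp hi; omega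
  simp only [Polynomial.coeToPowerSeries.ringHom_apply, Polynomial.coe_mul, Polynomial.coe_pow,
    ← hvu]
  conv_rhs => rw [hid]
  ring

theorem _root_.IsCoprime.dvd_of_sum_mul_pow_mul_pow_eq_zero {R : Type*} [CommRing R] {u v : R}
    (huv : IsCoprime v u) {d : ℕ} {T : ℕ → R}
    (h : ∑ i ∈ Finset.range (d + 1), T i * u ^ i * v ^ (d - i) = 0) :
    v ∣ T d ∧ u ∣ T 0 := by
  constructor
  · refine (huv.pow_right (n := d)).dvd_of_dvd_mul_right ?_
    rw [Finset.sum_range_succ, Nat.sub_self, pow_zero, mul_one, add_eq_zero_iff_eq_neg'] at h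
    rw [h]
    refine dvd_neg.mpr (Finset.dvd_sum fun i hi => Dvd.dvd.mul_left ?_ _)
    exact dvd_pow_self v (by have := Finset.mem_range.mp hi; omega)
  · refine (huv.symm.pow_right (n := d)).dvd_of_dvd_mul_right ?_
    rw [Finset.sum_range_succ', pow_zero, mul_one, Nat.sub_zero, add_eq_zero_iff_eq_neg'] at h
    rw [h]
    refine dvd_neg.mpr (Finset.dvd_sum fun i _ => Dvd.dvd.mul_right ?_ _)
    exact (dvd_pow_self u i.succ_ne_zero).mul_left _

theorem exists_mul_eq_natDegree_le {K : Type*} [Field K] {Φ : K⟦X⟧} {C D : K[X]} (hC : C ≠ 0)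
    (hCD : (C : K⟦X⟧) * Φ = D) {d : ℕ} {T : ℕ → K[X]} (hT0 : T 0 ≠ 0) (hTd : T d ≠ 0)
    (hT : ∑ i ∈ Finset.range (d + 1), (T i : K⟦X⟧) * Φ ^ i = 0) :
    ∃ u v : K[X], v ≠ 0 ∧ v.natDegree ≤ (T d).natDegree ∧ u.natDegree ≤ (T 0).natDegree ∧
      (v : K⟦X⟧) * Φ = u := by
  obtain ⟨u, v, huv, hv, hvu⟩ := exists_isCoprime_mul_eq hC hCD
  obtain ⟨hvd, hu0⟩ := huv.dvd_of_sum_mul_pow_mul_pow_eq_zero (sum_mul_pow_mul_pow_eq_zero hvu hT)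
  exact ⟨u, v, hv, Polynomial.natDegree_le_of_dvd hvd hTd,
    Polynomial.natDegree_le_of_dvd hu0 hT0, hvu⟩

theorem coeff_coe_mul_eq_sum {R : Type*} [CommSemiring R] {v : R[X]} {r : ℕ}
    (hv : v.natDegree ≤ r) (Φ : R⟦X⟧) {n : ℕ} (hn : r ≤ n) :
    coeff n ((v : R⟦X⟧) * Φ) = ∑ j : Fin (r + 1), coeff (n - j) Φ * v.coeff j := by
  rw [coeff_mul, Finset.Nat.sum_antidiagonal_eq_sum_range_succ_mk,
    Fin.sum_univ_eq_sum_range (fun j => coeff (n - j) Φ * v.coeff j)]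
  simp only [Polynomial.coeff_coe]
  symm
  rw [Finset.sum_subset (Finset.range_subset_range.mpr (Nat.succ_le_succ hn)) fun j _ hj => ?_]
  · exact Finset.sum_congr rfl fun j _ => mul_comm _ _
  · rw [Polynomial.coeff_eq_zero_of_natDegree_lt (by simp at hj; omega), mul_zero]

end PowerSeries

theorem exists_ne_zero_dotProduct_eq_zero_of_det_eq_zero {K ι : Type*} [Field K] {n : ℕ}
    (R : ι → Fin n → K) (hR : ∀ t : Fin n → ι, (Matrix.of fun i => R (t i)).det = 0) :
    ∃ c ≠ 0, ∀ s, R s ⬝ᵥ c = 0 := by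
  have hspan : Submodule.span K (Set.range R) ≠ ⊤ := by
    intro htop
    obtain ⟨b, hbR, hbspan, hb⟩ := exists_linearIndependent K (Set.range R)
    let B := Module.Basis.mk hb (by rw [Subtype.range_coe, hbspan, htop])
    let e := B.indexEquiv (Pi.basisFun K (Fin n))
    choose t ht using fun i => hbR (e.symm i).2
    refine ((Matrix.isUnit_iff_isUnit_det _).mp
      (Matrix.linearIndependent_rows_iff_isUnit.mp ?_)).ne_zero (hR t)
    rw [show (Matrix.of fun i => R (t i)).row = Subtype.val ∘ e.symm from funext ht]
    exact hb.comp e.symm e.symm.injective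
  obtain ⟨φ, hφ, hφR⟩ := Submodule.exists_dual_map_eq_bot_of_lt_top hspan.lt_top inferInstance
  set c : Fin n → K := fun i => φ fun j => if i = j then 1 else 0
  have hφc : ∀ v, φ v = v ⬝ᵥ c := fun v => by
    simp [φ.pi_apply_eq_sum_univ v, dotProduct, c]
  refine ⟨c, fun hc => hφ (LinearMap.ext fun v => by simp [hφc, hc]), fun s => ?_⟩
  rw [← hφc, ← Submodule.mem_bot K, ← hφR]
  exact Submodule.mem_map_of_mem (Submodule.subset_span ⟨s, rfl⟩)

theorem exists_rat_dotProduct_eq_zero_of_forall_prime {ι : Type*} {n : ℕ} (R : ι → Fin n → ℤ)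
    (N : ℕ) (h : ∀ p, N ≤ p → p.Prime → ∃ w : Fin n → ZMod p, w ≠ 0 ∧
      ∀ s, (fun j => (R s j : ZMod p)) ⬝ᵥ w = 0) :
    ∃ c : Fin n → ℚ, c ≠ 0 ∧ ∀ s, (fun j => (R s j : ℚ)) ⬝ᵥ c = 0 := by
  refine exists_ne_zero_dotProduct_eq_zero_of_det_eq_zero _ fun t => ?_
  set M : Matrix (Fin n) (Fin n) ℤ := Matrix.of fun i => R (t i)
  have hM : M.det = 0 := by
    obtain ⟨p, hNp, hp⟩ := Nat.exists_infinite_primes (max N (M.det.natAbs + 1))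
    have := Fact.mk hp
    obtain ⟨w, hw, hRw⟩ := h p (le_of_max_le_left hNp) hp
    refine Int.eq_zero_of_dvd_of_natAbs_lt_natAbs ((ZMod.intCast_zmod_eq_zero_iff_dvd _ p).mp ?_)
      (by rw [Int.natAbs_natCast]; omega)
    rw [Int.cast_det]
    exact Matrix.exists_mulVec_eq_zero_iff.mp ⟨w, hw, funext fun i => hRw (t i)⟩
  have := congrArg (Int.cast : ℤ → ℚ) hM
  rwa [Int.cast_det, Int.cast_zero] at this

theorem exists_polynomial_mul_eq_of_forall_prime (F : ℤ⟦X⟧) (r m N : ℕ)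
    (h : ∀ p, N ≤ p → p.Prime → ∃ u v : (ZMod p)[X], v ≠ 0 ∧ v.natDegree ≤ r ∧
      u.natDegree < m ∧ (v : (ZMod p)⟦X⟧) * map (Int.castRingHom (ZMod p)) F = u) :
    ∃ u v : ℚ[X], v ≠ 0 ∧ (v : ℚ⟦X⟧) * map (Int.castRingHom ℚ) F = u := by
  -- Row `s` holds the coefficients of `F` that enter `coeff (m + s + r) (v * F)`, so the
  -- coefficient vector of `v` is orthogonal to every row.
  obtain ⟨c, hc, hcF⟩ := exists_rat_dotProduct_eq_zero_of_forall_prime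
      (fun s (j : Fin (r + 1)) => coeff (m + s + r - j) F) N fun p hNp hp => by
    obtain ⟨u, v, hv, hvr, hum, hvu⟩ := h p hNp hp
    refine ⟨fun j => v.coeff j, fun hv0 => hv ?_, fun s => ?_⟩
    · exact Polynomial.leadingCoeff_eq_zero.mp (congrFun hv0 ⟨v.natDegree, by omega⟩)
    · have := coeff_coe_mul_eq_sum hvr (map (Int.castRingHom (ZMod p)) F) (n := m + s + r)
        (by omega)
      rw [hvu, Polynomial.coeff_coe, Polynomial.coeff_eq_zero_of_natDegree_lt (by omega)] at this
      simpa [coeff_map, dotProduct] using this.symm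
  set V : ℚ[X] := ((Polynomial.degreeLTEquiv ℚ (r + 1)).symm c : ℚ[X])
  have hVc : ∀ j : Fin (r + 1), V.coeff j = c j :=
    congrFun ((Polynomial.degreeLTEquiv ℚ (r + 1)).apply_symm_apply c)
  have hV : V.natDegree ≤ r := Polynomial.natDegree_le_iff_degree_le.mpr
    (Order.le_of_lt_succ (Polynomial.mem_degreeLT.mp (Subtype.property _)))
  refine ⟨trunc (m + r) (V * map (Int.castRingHom ℚ) F), V, fun hV0 => hc (funext fun j => ?_), ?_⟩
  · rw [← hVc, hV0, Polynomial.coeff_zero, Pi.zero_apply]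
  · ext n
    rw [Polynomial.coeff_coe, coeff_trunc]
    split_ifs with hn
    · rfl
    obtain ⟨s, rfl⟩ : ∃ s, n = m + s + r := ⟨n - m - r, by omega⟩
    rw [coeff_coe_mul_eq_sum hV _ (by omega)]
    simpa [coeff_map, hVc, dotProduct] using hcF s

theorem exists_sum_mul_pow_eq_zero_with_ends_ne_zero {R S : Type*} [CommRing R] [CommRing S]
    [IsDomain S] (f : R →+* S) {x : S} (hx : x ≠ 0) {k : ℕ} {Q : ℕ → R}
    (hQ : ∃ i ≤ k, Q i ≠ 0) (h : ∑ i ∈ Finset.range (k + 1), f (Q i) * x ^ i = 0) :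
    ∃ (d : ℕ) (T : ℕ → R), T 0 ≠ 0 ∧ T d ≠ 0 ∧
      ∑ i ∈ Finset.range (d + 1), f (T i) * x ^ i = 0 := by
  -- Divide `P = ∑ Qᵢ Yⁱ` by the largest power of `Y` dividing it.
  set P : R[X] := ∑ i ∈ Finset.range (k + 1), Polynomial.monomial i (Q i)
  have hP : P ≠ 0 := by
    obtain ⟨i, hi, hQi⟩ := hQ
    refine fun h0 => hQi ?_
    have := congrArg (Polynomial.coeff · i) h0
    simpa [P, Polynomial.finsetSum_coeff, Polynomial.coeff_monomial, Nat.lt_succ_iff.mpr hi]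
      using this
  have hPx : P.eval₂ f x = 0 := by simpa [P, Polynomial.eval₂_finsetSum] using h
  obtain ⟨T, hPT, hXT⟩ := P.exists_eq_pow_rootMultiplicity_mul_and_not_dvd hP 0
  rw [map_zero, sub_zero] at hPT hXT
  refine ⟨T.natDegree, T.coeff, fun h0 => hXT (Polynomial.X_dvd_iff.mpr h0),
    Polynomial.leadingCoeff_ne_zero.mpr (right_ne_zero_of_mul (hPT ▸ hP)), ?_⟩
  rw [hPT, Polynomial.eval₂_mul, Polynomial.eval₂_X_pow] at hPx
  rw [← Polynomial.eval₂_eq_sum_range]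
  exact (mul_eq_zero.mp hPx).resolve_left (pow_ne_zero _ hx)

theorem Polynomial.exists_map_intCast_eq_C_mul {ι : Type*} (s : Finset ι) (Q : ι → ℚ[X]) :
    ∃ c : ℤ, c ≠ 0 ∧ ∃ S : ι → ℤ[X], ∀ i ∈ s,
      (S i).map (Int.castRingHom ℚ) = Polynomial.C (c : ℚ) * Q i := by
  let _ := Polynomial.algebra ℤ ℚ
  have := Polynomial.isLocalization (nonZeroDivisors ℤ) ℚ
  obtain ⟨⟨b, hb⟩, hbQ⟩ := IsLocalization.exist_integer_multiples
    ((nonZeroDivisors ℤ).map Polynomial.C) s Q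
  obtain ⟨c, hc, rfl⟩ := Submonoid.mem_map.mp hb
  have hS : ∀ i, ∃ S : ℤ[X], i ∈ s → S.map (Int.castRingHom ℚ) = Polynomial.C (c : ℚ) * Q i := by
    intro i
    by_cases hi : i ∈ s
    · obtain ⟨S, hS⟩ := hbQ i hi
      exact ⟨S, fun _ => by simpa [Algebra.smul_def] using hS⟩
    · exact ⟨0, fun h => absurd h hi⟩
  choose S hS using hS
  exact ⟨c, nonZeroDivisors.ne_zero hc, S, hS⟩

theorem exists_int_sum_mul_pow_eq_zero_with_ends_ne_zero {F : ℤ⟦X⟧} (hF : F ≠ 0) {k : ℕ}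
    {Q : ℕ → ℚ[X]} (hQ : ∃ i ≤ k, Q i ≠ 0)
    (h : ∑ i ∈ Finset.range (k + 1), (Q i : ℚ⟦X⟧) * map (Int.castRingHom ℚ) F ^ i = 0) :
    ∃ (d : ℕ) (S : ℕ → ℤ[X]), S 0 ≠ 0 ∧ S d ≠ 0 ∧
      ∑ i ∈ Finset.range (d + 1), (S i : ℤ⟦X⟧) * F ^ i = 0 := by
  obtain ⟨c, hc, S, hS⟩ := Polynomial.exists_map_intCast_eq_C_mul (Finset.range (k + 1)) Q
  have hSQ : ∃ i ≤ k, S i ≠ 0 := by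
    obtain ⟨i, hi, hQi⟩ := hQ
    refine ⟨i, hi, fun h0 => ?_⟩
    have := hS i (Finset.mem_range.mpr (by omega))
    rw [h0, Polynomial.map_zero, eq_comm, mul_eq_zero, Polynomial.C_eq_zero,
      Int.cast_eq_zero] at this
    exact this.elim hc hQi
  have hSF : ∑ i ∈ Finset.range (k + 1),
      Polynomial.coeToPowerSeries.ringHom (S i) * F ^ i = 0 := by
    apply map_injective (Int.castRingHom ℚ) Int.cast_injective
    rw [map_sum, map_zero, ← mul_zero ((Polynomial.C (c : ℚ) : ℚ[X]) : ℚ⟦X⟧), ← h, Finset.mul_sum]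
    refine Finset.sum_congr rfl fun i hi => ?_
    rw [Polynomial.coeToPowerSeries.ringHom_apply, map_mul, map_pow,
      ← Polynomial.polynomial_map_coe, hS i hi, Polynomial.coe_mul, mul_assoc]
  simpa only [Polynomial.coeToPowerSeries.ringHom_apply] using
    exists_sum_mul_pow_eq_zero_with_ends_ne_zero _ hF hSQ hSF

theorem Polynomial.map_intCast_zmod_ne_zero {S : ℤ[X]} (hS : S ≠ 0) {p : ℕ}
    (hp : S.leadingCoeff.natAbs < p) : S.map (Int.castRingHom (ZMod p)) ≠ 0 := by
  intro h0
  have := congrArg (Polynomial.coeff · S.natDegree) h0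
  simp only [Polynomial.coeff_map, Polynomial.coeff_zero, eq_intCast,
    ZMod.intCast_zmod_eq_zero_iff_dvd] at this
  exact Polynomial.leadingCoeff_ne_zero.mpr hS
    (Int.eq_zero_of_dvd_of_natAbs_lt_natAbs this (by simpa))

theorem exists_polynomial_mul_eq_of_lucas {A F : ℤ⟦X⟧} (hA : constantCoeff A = 1)
    (hAF : A * F = d⁄dX ℤ A) {N : ℕ}
    (hLucas : ∀ p, N ≤ p → p.Prime → map (Int.castRingHom (ZMod p)) A =
      map (Int.castRingHom (ZMod p)) A ^ p * trunc p (map (Int.castRingHom (ZMod p)) A))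
    {d : ℕ} {S : ℕ → ℤ[X]} (hS0 : S 0 ≠ 0) (hSd : S d ≠ 0)
    (hS : ∑ i ∈ Finset.range (d + 1), (S i : ℤ⟦X⟧) * F ^ i = 0) :
    ∃ u v : ℚ[X], v ≠ 0 ∧ (v : ℚ⟦X⟧) * map (Int.castRingHom ℚ) F = u := by
  refine exists_polynomial_mul_eq_of_forall_prime F (S d).natDegree ((S 0).natDegree + 1)
    (max N (max (S 0).leadingCoeff.natAbs (S d).leadingCoeff.natAbs + 1)) fun p hNp hp => ?_
  have := Fact.mk hp
  set φ := Int.castRingHom (ZMod p)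
  have hAp : IsUnit (map φ A) := isUnit_iff_constantCoeff.mpr (by
    simp [← coeff_zero_eq_constantCoeff_apply, coeff_map, hA])
  have hApF : map φ A * map φ F = d⁄dX _ (map φ A) := by rw [← map_mul, hAF, map_derivative]
  have hC : trunc p (map φ A) ≠ 0 := fun h0 => by
    simpa [hA, coeff_trunc, hp.pos] using congrArg (Polynomial.coeff · 0) h0
  have hCF := mul_derivative_eq_of_eq_pow_mul p hAp hApF (hLucas p (le_of_max_le_left hNp) hp)
  rw [derivative_coe] at hCF
  obtain ⟨u, v, hv, hvd, hu0, hvu⟩ := exists_mul_eq_natDegree_le hC hCF (d := d)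
    (T := fun i => (S i).map φ) (Polynomial.map_intCast_zmod_ne_zero hS0 (by omega))
    (Polynomial.map_intCast_zmod_ne_zero hSd (by omega)) (by simpa using congrArg (map φ) hS)
  exact ⟨u, v, hv, hvd.trans Polynomial.natDegree_map_le,
    Nat.lt_succ_of_le (hu0.trans Polynomial.natDegree_map_le), hvu⟩

theorem psDeriv_eq_derivative (f : ℚ⟦X⟧) : psDeriv f = d⁄dX ℚ f := by
  ext n
  rw [psDeriv, coeff_mk, coeff_derivative]
  ring

/-- If `G = ∑ a_n x^n ∈ ℤ⟦x⟧` has `a_0 = 1` and the Lucas property, and `G'/G` is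
algebraic over `ℚ(x)`, then `G'/G` is rational over `ℚ`. In particular, for all
large primes `p`, `G ≡ G^p · G_p (mod p)` where `G_p = ∑_{n ≤ p-1} a_n x^n`. -/
theorem lucas_logDeriv_rational (a : ℕ → ℤ) (h0 : a 0 = 1)
    (hLucas : ∃ N : ℕ, ∀ p : ℕ, N ≤ p → p.Prime → ∀ n q : ℕ, q ≤ p - 1 →
      (p : ℤ) ∣ a (n * p + q) - a n * a q)
    (G : PowerSeries ℚ) (hG : G = PowerSeries.mk fun n => (a n : ℚ))
    (halg : ∃ k : ℕ, ∃ Q : ℕ → Polynomial ℚ, (∃ i, i ≤ k ∧ Q i ≠ 0) ∧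
      ∑ i ∈ Finset.range (k + 1),
        (Q i : PowerSeries ℚ) * (psDeriv G * G⁻¹) ^ i = 0) :
    (∃ P R : Polynomial ℚ, R ≠ 0 ∧
      (R : PowerSeries ℚ) * psDeriv G = (P : PowerSeries ℚ) * G) ∧
    (∃ N : ℕ, ∀ p : ℕ, N ≤ p → p.Prime →
      (PowerSeries.mk fun n => (a n : ZMod p)) =
        (PowerSeries.mk fun n => (a n : ZMod p)) ^ p *
          PowerSeries.mk (fun n => if n ≤ p - 1 then (a n : ZMod p) else 0)) := by
  obtain ⟨N, hN⟩ := hLucas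
  set A : ℤ⟦X⟧ := mk a
  have hmap : ∀ (R : Type) [CommRing R], map (Int.castRingHom R) A = mk fun n => (a n : R) :=
    fun R _ => by ext; simp [A]
  have hA : constantCoeff A = 1 := by simp [A, ← coeff_zero_eq_constantCoeff_apply, h0]
  have hLucasA : ∀ p, N ≤ p → p.Prime → map (Int.castRingHom (ZMod p)) A =
      map (Int.castRingHom (ZMod p)) A ^ p * trunc p (map (Int.castRingHom (ZMod p)) A) := by
    intro p hNp hp
    have := Fact.mk hp
    refine eq_pow_mul_trunc_of_coeff_mul_add fun n q hq => ?_
    have := (ZMod.intCast_zmod_eq_zero_iff_dvd _ p).mpr (hN p hNp hp n q (by omega))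
    simpa [hmap, sub_eq_zero] using this
  refine ⟨?_, N, fun p hNp hp => ?_⟩
  · have hAu : IsUnit A := isUnit_iff_constantCoeff.mpr (hA ▸ isUnit_one)
    obtain ⟨F, hAF⟩ : ∃ F, A * F = d⁄dX ℤ A :=
      ⟨↑hAu.unit⁻¹ * d⁄dX ℤ A, by rw [← mul_assoc, hAu.mul_val_inv, one_mul]⟩
    have hGF : psDeriv G = G * map (Int.castRingHom ℚ) F := by
      rw [psDeriv_eq_derivative, hG, ← hmap, ← map_derivative, ← hAF, map_mul]
    by_cases hF : F = 0
    · exact ⟨0, 1, one_ne_zero, by simp [hGF, hF]⟩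
    have hlog : psDeriv G * G⁻¹ = map (Int.castRingHom ℚ) F := by
      rw [hGF, mul_comm G, mul_assoc, PowerSeries.mul_inv_cancel _ (by simp [hG, h0]), mul_one]
    obtain ⟨k, Q, hQ, hrel⟩ := halg
    rw [hlog] at hrel
    obtain ⟨d, S, hS0, hSd, hS⟩ := exists_int_sum_mul_pow_eq_zero_with_ends_ne_zero hF hQ hrel
    obtain ⟨u, v, hv, hvu⟩ := exists_polynomial_mul_eq_of_lucas hA hAF hLucasA hS0 hSd hS
    exact ⟨u, v, hv, by rw [hGF, mul_left_comm, hvu, mul_comm]⟩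
  · have hL := hLucasA p hNp hp
    rw [hmap] at hL
    refine hL.trans (congrArg _ ?_)
    ext n
    simp [Polynomial.coeff_coe, coeff_trunc, Nat.lt_iff_le_pred hp.pos]
end
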